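/- arXiv:2604.17057 — 2 statements merged into one kernel-verified Lean document; each statement's English description precedes it below -/
import Mathlib

section
/- The collections of coalitions generated by the distinct ≈-equivalence classes of increment arrays of size s partition the set of all size-s subsets of {1, …, n}: every subset C ⊆ {1, …, n} with |C| = s lies in ⋃_{i=1}^{n} {C(i, t)} for exactly one equivalence class [t] of size-s increment arrays. -/
/-!
Listing the members of `C(x, t)` in cyclic order from `x`, consecutive members are `t_i + 1`
apart (the last one wraps around to `x`), so `t_i` is the number of agents skipped after the
`i`-th member. Conversely, a set `C` determines these gaps once a first member is chosen:
sorting `C` and closing the cycle gives an increment array generating `C`, and two arrays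
generating `C` can only differ by the choice of first member, i.e. by a rotation.
-/

namespace NDCA

/-- `t` is an increment array (IA) of size `s` for `n` agents:
a tuple of non-negative integers of length `s` with sum `n - s`. -/
def IsIA (n s : ℕ) (t : List ℕ) : Prop :=
  t.length = s ∧ t.sum = n - s

/-- Cumulative increment `φ_i` (1-indexed): `φ_1 = 0`, and
`φ_i = Σ_{k=0}^{i-2} (t_k + 1)` for `2 ≤ i`. -/
def phi (t : List ℕ) (i : ℕ) : ℕ := (t.take (i - 1)).sum + (i - 1)

/-- The coalition generated by increment array `t` from starting agent `x`:
`C(x,t) = { ((x - 1 + φ_i) mod n) + 1 : 1 ≤ i ≤ s }`. -/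
def coal (n x : ℕ) (t : List ℕ) : Finset ℕ :=
  (Finset.Icc 1 t.length).image (fun i => (x - 1 + phi t i) % n + 1)

/-- The collection of coalitions generated by `t` as the starting agent
ranges over `{1, …, n}`. -/
def gen (n : ℕ) (t : List ℕ) : Finset (Finset ℕ) :=
  (Finset.Icc 1 n).image (fun x => coal n x t)

/-- `u` is a circular shift of `t`: `u = ⟨t_k, …, t_{s-1}, t_0, …, t_{k-1}⟩`
for some `0 ≤ k ≤ s - 1`. -/
def ShiftEquiv (t u : List ℕ) : Prop :=
  ∃ k, k < t.length ∧ u = t.rotate k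

/-- `p` is a period of `t`: `1 ≤ p`, `p ∣ |t|`, and `t` consists of
`|t|/p` identical copies of its first `p` entries. -/
def IsPeriodOf (t : List ℕ) (p : ℕ) : Prop :=
  1 ≤ p ∧ p ∣ t.length ∧ t = (List.replicate (t.length / p) (t.take p)).flatten

/-- The period `π(t)`: the smallest `p` that is a period of `t`. -/
noncomputable def period (t : List ℕ) : ℕ := sInf {p | IsPeriodOf t p}

lemma phi_one (t : List ℕ) : phi t 1 = 0 := by simp [phi]

lemma phi_succ_succ (t : List ℕ) {i : ℕ} (hi : i < t.length) :
    phi t (i + 1 + 1) = phi t (i + 1) + t.getD i 0 + 1 := by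
  simp only [phi, Nat.add_sub_cancel, show i + 1 + 1 - 1 = i + 1 by omega,
    List.sum_take_succ _ _ hi, List.getD_eq_getElem _ _ hi]
  omega

lemma phi_mono (t : List ℕ) {i j : ℕ} (hij : i ≤ j) : phi t i ≤ phi t j := by
  have hsub : (t.take (i - 1)).Sublist (t.take (j - 1)) := by
    simpa [List.take_take, min_eq_left (show i - 1 ≤ j - 1 by omega)] using
      List.take_sublist (i - 1) (t.take (j - 1))
  have := hsub.sum_le_sum fun a _ => Nat.zero_le a
  simp only [phi]
  omega

lemma phi_length_succ (t : List ℕ) : phi t (t.length + 1) = t.sum + t.length := by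
  simp [phi]

lemma phi_length_succ_of_isIA {n s : ℕ} {t : List ℕ} (ht : IsIA n s t) (hsn : s ≤ n) :
    phi t (s + 1) = n := by
  rw [← ht.1, phi_length_succ, ht.2, ht.1]
  omega

/-- The `i`-th member (counted from `0`) of `coal n x t` is `coalRes n x t i + 1`. -/
def coalRes (n x : ℕ) (t : List ℕ) (i : ℕ) : ℕ := (x - 1 + phi t (i + 1)) % n

section Coalition

variable {n s x : ℕ} {t : List ℕ}

lemma mem_coal {c : ℕ} : c ∈ coal n x t ↔ ∃ i < t.length, c = coalRes n x t i + 1 := by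
  simp only [coal, coalRes, Finset.mem_image, Finset.mem_Icc]
  constructor
  · rintro ⟨i, hi, rfl⟩
    exact ⟨i - 1, by omega, by rw [Nat.sub_add_cancel hi.1]⟩
  · rintro ⟨i, hi, rfl⟩
    exact ⟨i + 1, by omega, rfl⟩

lemma coal_eq_toFinset {l : List ℕ} (hlen : t.length = l.length)
    (hres : ∀ i (hi : i < l.length), coalRes n x t i + 1 = l[i]) : coal n x t = l.toFinset := by
  ext c
  rw [mem_coal, List.mem_toFinset, List.mem_iff_getElem, hlen]
  constructor
  · rintro ⟨i, hi, rfl⟩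
    exact ⟨i, hi, (hres i hi).symm⟩
  · rintro ⟨i, hi, rfl⟩
    exact ⟨i, hi, (hres i hi).symm⟩

lemma coalRes_add_one_mem {i : ℕ} (hi : i < t.length) : coalRes n x t i + 1 ∈ coal n x t :=
  mem_coal.2 ⟨i, hi, rfl⟩

lemma phi_add_getD_lt (ht : IsIA n s t) (hsn : s ≤ n) {i : ℕ} (hi : i < s) :
    phi t (i + 1) + t.getD i 0 < n := by
  have := phi_succ_succ t (ht.1 ▸ hi)
  have := phi_mono t (show i + 1 + 1 ≤ s + 1 by omega)
  have := phi_length_succ_of_isIA ht hsn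
  omega

lemma coalRes_add_getD (ht : IsIA n s t) (hsn : s ≤ n) {i : ℕ} (hi : i < s) :
    (coalRes n x t i + (t.getD i 0 + 1)) % n = coalRes n x t ((i + 1) % s) := by
  have hstep := phi_succ_succ t (ht.1 ▸ hi)
  simp only [coalRes, Nat.mod_add_mod]
  rcases Nat.lt_or_ge (i + 1) s with hlt | hge
  · rw [Nat.mod_eq_of_lt hlt]
    congr 1
    omega
  · have hs : i + 1 = s := by omega
    have htop : phi t (i + 1 + 1) = n := by rw [hs]; exact phi_length_succ_of_isIA ht hsn
    rw [show (i + 1) % s = 0 by rw [hs, Nat.mod_self], phi_one, add_zero,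
      show x - 1 + phi t (i + 1) + (t.getD i 0 + 1) = x - 1 + n by omega, Nat.add_mod_right]

lemma coalRes_add_not_mem (ht : IsIA n s t) (hsn : s ≤ n) {i d : ℕ} (hi : i < s)
    (hd : 0 < d) (hdt : d ≤ t.getD i 0) : (coalRes n x t i + d) % n + 1 ∉ coal n x t := by
  rw [mem_coal]
  rintro ⟨j, hj, hji⟩
  have hjs : j < s := ht.1 ▸ hj
  have hi_lt := phi_add_getD_lt ht hsn hi
  have hj_lt := phi_add_getD_lt ht hsn hjs
  have hmod : (x - 1 + (phi t (i + 1) + d)) % n = (x - 1 + phi t (j + 1)) % n := by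
    simp only [coalRes, Nat.mod_add_mod] at hji
    rw [← add_assoc]
    omega
  have heq : phi t (i + 1) + d = phi t (j + 1) :=
    (Nat.ModEq.add_left_cancel' _ hmod).eq_of_lt_of_lt (by omega) (by omega)
  rcases Nat.lt_or_ge i j with hij | hji
  · have := phi_mono t (show i + 1 + 1 ≤ j + 1 by omega)
    have := phi_succ_succ t (ht.1 ▸ hi)
    omega
  · have := phi_mono t (show j + 1 ≤ i + 1 by omega)
    omega

variable {y : ℕ} {u : List ℕ}

lemma getD_le_of_coalRes_eq (ht : IsIA n s t) (hu : IsIA n s u) (hsn : s ≤ n)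
    (hC : coal n x t = coal n y u) {p m : ℕ} (hp : p < s) (hm : m < s)
    (hpm : coalRes n x t p = coalRes n y u m) : t.getD p 0 ≤ u.getD m 0 := by
  by_contra! hlt
  -- the member that follows position `m` of `u` would lie strictly inside the gap after `p` in `t`
  have hmem : (coalRes n y u m + (u.getD m 0 + 1)) % n + 1 ∈ coal n y u := by
    rw [coalRes_add_getD hu hsn hm]
    exact coalRes_add_one_mem (by rw [hu.1]; exact Nat.mod_lt _ (by omega))
  rw [← hpm, ← hC] at hmem
  exact coalRes_add_not_mem ht hsn hp (by omega) hlt hmem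

lemma getD_eq_of_coalRes_eq (ht : IsIA n s t) (hu : IsIA n s u) (hsn : s ≤ n)
    (hC : coal n x t = coal n y u) {p m : ℕ} (hp : p < s) (hm : m < s)
    (hpm : coalRes n x t p = coalRes n y u m) : t.getD p 0 = u.getD m 0 :=
  le_antisymm (getD_le_of_coalRes_eq ht hu hsn hC hp hm hpm)
    (getD_le_of_coalRes_eq hu ht hsn hC.symm hm hp hpm.symm)

lemma coalRes_eq_coalRes_add_mod (ht : IsIA n s t) (hu : IsIA n s u) (hsn : s ≤ n)
    (hC : coal n x t = coal n y u) {j : ℕ} (hj : j < s)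
    (h0 : coalRes n y u 0 = coalRes n x t j) :
    ∀ m < s, coalRes n y u m = coalRes n x t ((m + j) % s)
  | 0, _ => by rwa [zero_add, Nat.mod_eq_of_lt hj]
  | m + 1, hm => by
    have ih := coalRes_eq_coalRes_add_mod ht hu hsn hC hj h0 m (by omega)
    have hjm : (m + j) % s < s := Nat.mod_lt _ (by omega)
    calc coalRes n y u (m + 1)
        = coalRes n y u ((m + 1) % s) := by rw [Nat.mod_eq_of_lt hm]
      _ = (coalRes n y u m + (u.getD m 0 + 1)) % n := (coalRes_add_getD hu hsn (by omega)).symm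
      _ = (coalRes n x t ((m + j) % s) + (t.getD ((m + j) % s) 0 + 1)) % n := by
        rw [ih, getD_eq_of_coalRes_eq ht hu hsn hC hjm (by omega) ih.symm]
      _ = coalRes n x t ((m + 1 + j) % s) := by
        rw [coalRes_add_getD ht hsn hjm, Nat.mod_add_mod, add_right_comm]

lemma shiftEquiv_of_coal_eq (ht : IsIA n s t) (hu : IsIA n s u) (hs : 1 ≤ s) (hsn : s ≤ n)
    (hC : coal n x t = coal n y u) : ShiftEquiv t u := by
  obtain ⟨j, hj, hj0⟩ : ∃ j < t.length, coalRes n y u 0 + 1 = coalRes n x t j + 1 :=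
    mem_coal.1 (hC ▸ coalRes_add_one_mem (by rw [hu.1]; omega))
  have hjs : j < s := ht.1 ▸ hj
  have hres := coalRes_eq_coalRes_add_mod ht hu hsn hC hjs (by omega)
  refine ⟨j, hj, List.ext_getElem (by simp [ht.1, hu.1]) fun m hm _ => ?_⟩
  have hms : m < s := hu.1 ▸ hm
  rw [List.getElem_rotate, ← List.getD_eq_getElem _ 0, ← List.getD_eq_getElem _ 0, ht.1]
  exact (getD_eq_of_coalRes_eq ht hu hsn hC (Nat.mod_lt _ (by omega)) hms (hres m hms).symm).symm

end Coalition

def gapList (L : List ℕ) : List ℕ := List.zipWith (fun a b => b - a - 1) L L.tail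

lemma length_gapList (L : List ℕ) : (gapList L).length = L.length - 1 := by
  simp [gapList]

lemma phi_gapList_add_head {L : List ℕ} (hL : L.Pairwise (· < ·)) :
    ∀ i (hi : i < L.length), phi (gapList L) (i + 1) + L[0] = L[i]
  | 0, _ => by rw [phi_one, zero_add]
  | i + 1, hi => by
    have hgap : i < (gapList L).length := by rw [length_gapList]; omega
    have hlt : L[i] < L[i + 1] := List.pairwise_iff_getElem.1 hL i (i + 1) _ hi (by omega)
    have ih := phi_gapList_add_head hL i (by omega)
    have hget : (gapList L)[i] = L[i + 1] - L[i] - 1 := by simp [gapList]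
    rw [phi_succ_succ _ hgap, List.getD_eq_getElem _ _ hgap, hget]
    omega

lemma exists_isIA_coal_eq {n : ℕ} {C : Finset ℕ} (hsub : C ⊆ Finset.Icc 1 n) (hC : C.Nonempty) :
    ∃ t, IsIA n C.card t ∧ ∃ x ∈ Finset.Icc 1 n, coal n x t = C := by
  set l := C.sort (· ≤ ·)
  have hl : l.length = C.card := Finset.length_sort _
  have hl0 : 0 < l.length := hl ▸ hC.card_pos
  have hbound : ∀ i (hi : i < l.length), 1 ≤ l[i] ∧ l[i] ≤ n := fun i hi =>
    Finset.mem_Icc.1 (hsub ((Finset.mem_sort _).1 (List.getElem_mem hi)))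
  set a := l[0]
  -- closing the cycle: the last gap runs from the largest member around to `a + n ≡ a`
  set L := l ++ [a + n]
  have hL : L.Pairwise (· < ·) := by
    refine List.pairwise_append.2 ⟨(Finset.sortedLT_sort C).pairwise, by simp, ?_⟩
    intro b hb c hc
    obtain ⟨i, hi, rfl⟩ := List.mem_iff_getElem.1 hb
    have := hbound i hi
    have := hbound 0 hl0
    simp only [List.mem_singleton] at hc
    omega
  have hphi : ∀ i (hi : i < L.length), phi (gapList L) (i + 1) + a = L[i] := by
    simpa [L, List.getElem_append_left hl0] using phi_gapList_add_head hL
  have hlen : (gapList L).length = l.length := by simp [L, length_gapList]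
  have hsum : (gapList L).sum + l.length = n := by
    have htop : phi (gapList L) (l.length + 1) + a = a + n := by
      simpa [L] using hphi l.length (by simp [L])
    have := phi_length_succ (gapList L)
    rw [hlen] at this
    omega
  refine ⟨gapList L, ⟨hlen.trans hl, by omega⟩, a, Finset.mem_Icc.2 (hbound 0 hl0), ?_⟩
  refine (coal_eq_toFinset hlen fun i hi => ?_).trans (Finset.sort_toFinset C _)
  have h := hphi i (by simp [L]; omega)
  rw [List.getElem_append_left hi] at h
  have := hbound i hi
  have := hbound 0 hl0
  rw [coalRes, show a - 1 + phi (gapList L) (i + 1) = l[i] - 1 by omega,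
    Nat.mod_eq_of_lt (by omega)]
  omega

theorem stmt11_general (n s : ℕ) (hs1 : 1 ≤ s) (hsn : s ≤ n)
    (C : Finset ℕ) (hsub : C ⊆ Finset.Icc 1 n) (hcard : C.card = s) :
    (∃ t, IsIA n s t ∧ C ∈ gen n t) ∧
    (∀ t u, IsIA n s t → IsIA n s u →
      C ∈ gen n t → C ∈ gen n u → ShiftEquiv t u) := by
  refine ⟨?_, fun t u ht hu hCt hCu => ?_⟩
  · obtain ⟨t, ht, x, hx, hxt⟩ := exists_isIA_coal_eq hsub (Finset.card_pos.1 (by omega))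
    exact ⟨t, hcard ▸ ht, Finset.mem_image.2 ⟨x, hx, hxt⟩⟩
  · obtain ⟨x, -, hx⟩ := Finset.mem_image.1 hCt
    obtain ⟨y, -, hy⟩ := Finset.mem_image.1 hCu
    exact shiftEquiv_of_coal_eq ht hu hs1 hsn (hx.trans hy.symm)

/-- Every `C ⊆ {1,…,n}` with `|C| = s` lies in the
collection of coalitions generated by exactly one `≈`-equivalence class of
size-`s` increment arrays: some increment array generates it, and any two
increment arrays generating it are circular shifts of one another. -/
theorem stmt11 (n s : ℕ) (hn : 1 ≤ n) (hs1 : 1 ≤ s) (hsn : s ≤ n)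
    (C : Finset ℕ) (hsub : C ⊆ Finset.Icc 1 n) (hcard : C.card = s) :
    (∃ t, IsIA n s t ∧ C ∈ gen n t) ∧
    (∀ t u, IsIA n s t → IsIA n s u →
      C ∈ gen n t → C ∈ gen n u → ShiftEquiv t u) :=
  stmt11_general n s hs1 hsn C hsub hcard

end NDCA
end

section
/- Under the rotated designation scheme at coalition size s, for every agent x ∈ {1, …, n}, the number of coalitions of size s assigned to agent x satisfies ⌊C(n,s)/n⌋ ≤ |CV_x^s| ≤ ⌈C(n,s)/n⌉, where |CV_x^s| = |A(n,s)| + |{ j : (x − 1 − h_j) mod n < d_j }|. In particular, the maximum difference in per-size allocation between any two agents is at most 1. -/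
/-!
Rotation splits the increment arrays of size `s` into orbits, the orbit of `t` having `π(t)`
elements, and `s · d(t) = n · π(t)` for the stride `d(t)`. Summing over the canonical
representatives, `Σ_t d(t) = n · C(n-1, s-1) / s = C(n, s)`, so `C(n, s) = n · |A(n,s)| + H` with
`H = Σ_j d_j`. The strides `d_j ≤ n` of the periodic arrays lay consecutive windows
`[h_j, h_j + d_j)` end to end over `[0, H)`, and agent `x` is designated for `t_j` exactly when
that window contains a (necessarily unique) number `≡ x - 1 (mod n)`. Hence agent `x` receives
`|A(n,s)|` plus the number of `v < H` with `v ≡ x - 1 (mod n)`, which is `⌊H/n⌋` or `⌈H/n⌉`.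
-/


namespace NDCA

/-- The stride `ϖ(t) = n·π(t)/s` of an increment array of size `s`. -/
noncomputable def stride (n s : ℕ) (t : List ℕ) : ℕ := n * period t / s

/-- Cumulative offset `h_j = Σ_{i<j} d_i` over the periodic canonical IAs
enumerated (0-indexed) by the list `L`. -/
noncomputable def offsetAt (n s : ℕ) (L : List (List ℕ)) (j : ℕ) : ℕ :=
  ∑ i ∈ Finset.range j, stride n s (L.getD i [])

/-- The number of periodic canonical IAs (enumerated by `L`) for which agent
`x` passes the rotated designation test `(x - 1 - h_j) mod n < d_j`. -/
noncomputable def desigCount (n s : ℕ) (L : List (List ℕ)) (x : ℕ) : ℕ :=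
  ((Finset.range L.length).filter (fun j =>
    ((x : ℤ) - 1 - (offsetAt n s L j : ℤ)) % (n : ℤ)
      < (stride n s (L.getD j []) : ℤ))).card

end NDCA

open Finset Function

namespace List

variable {α : Type*}

theorem iterate_rotate_one (l : List α) (k : ℕ) :
    (fun l : List α => l.rotate 1)^[k] l = l.rotate k := by
  induction k with
  | zero => simp
  | succ k ih => rw [iterate_succ_apply', ih, rotate_rotate]

theorem isPeriodicPt_rotate_one_iff {l : List α} {k : ℕ} :
    IsPeriodicPt (fun l : List α => l.rotate 1) k l ↔ l.rotate k = l := by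
  rw [IsPeriodicPt, IsFixedPt, iterate_rotate_one]

theorem rotate_flatten_replicate (b : List α) (m : ℕ) :
    (replicate m b).flatten.rotate b.length = (replicate m b).flatten := by
  cases m with
  | zero => simp
  | succ m =>
    rw [replicate_succ, flatten_cons, rotate_append_length_eq, ← flatten_concat, ← replicate_succ',
      replicate_succ, flatten_cons]

theorem rotate_eq_self_iff_eq_flatten_replicate {l : List α} {p m : ℕ} (hl : l.length = m * p) :
    l.rotate p = l ↔ l = (replicate m (l.take p)).flatten := by
  constructor
  · induction m generalizing l with
    | zero => simp_all
    | succ m ih =>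
      intro hrot
      have hp : p ≤ l.length := by rw [hl]; nlinarith
      set b := l.take p
      set c := l.drop p
      have hc : c.length = m * p := by simp [c, hl, add_mul]
      have hbc : b ++ c = l := take_append_drop p l
      have hcb : c ++ b = l := by rw [← rotate_eq_drop_append_take hp, hrot]
      rcases m.eq_zero_or_pos with rfl | hm
      · have hc0 : c = [] := eq_nil_of_length_eq_zero (by simpa using hc)
        simpa [hc0] using hbc.symm
      have hpc : p ≤ c.length := by rw [hc]; nlinarith
      have htake : c.take p = b := by
        rw [← take_append_of_le_length hpc, hcb]
      -- `c = drop p (b ++ c) = drop p (c ++ b) = drop p c ++ take p c`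
      have hrotc : c.rotate p = c := by
        conv_rhs => rw [← drop_left' (length_take_of_le hp) (l₂ := c), hbc, ← hcb]
        rw [drop_append_of_le_length hpc, rotate_eq_drop_append_take hpc, htake]
      calc l = b ++ c := hbc.symm
        _ = b ++ (replicate m b).flatten := by rw [← htake, ← ih hc hrotc]
        _ = _ := by rw [replicate_succ, flatten_cons]
  · intro h
    rcases Nat.eq_zero_or_pos m with rfl | hm
    · simp [eq_nil_of_length_eq_zero (by simpa using hl)]
    have hp : p ≤ l.length := by rw [hl]; nlinarith
    set b := l.take p
    calc l.rotate p = (replicate m b).flatten.rotate b.length := by rw [length_take_of_le hp, ← h]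
      _ = l := by rw [rotate_flatten_replicate, ← h]

theorem card_image_rotate_range [DecidableEq α] {l : List α} (hl : l ≠ []) :
    #((Finset.range l.length).image l.rotate) = minimalPeriod (fun l : List α => l.rotate 1) l := by
  set m := minimalPeriod (fun l : List α => l.rotate 1) l
  have hper : IsPeriodicPt (fun l : List α => l.rotate 1) l.length l :=
    isPeriodicPt_rotate_one_iff.2 l.rotate_length
  have hle : m ≤ l.length := hper.minimalPeriod_le (length_pos_iff.mpr hl)
  have himage : (Finset.range l.length).image l.rotate = (Finset.range m).image l.rotate := by
    ext u
    simp only [Finset.mem_image, Finset.mem_range]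
    constructor
    · rintro ⟨k, -, rfl⟩
      refine ⟨k % m, Nat.mod_lt _ (hper.minimalPeriod_pos (length_pos_iff.mpr hl)), ?_⟩
      rw [← iterate_rotate_one, ← iterate_rotate_one, iterate_mod_minimalPeriod_eq]
    · rintro ⟨k, hk, rfl⟩
      exact ⟨k, hk.trans_le hle, rfl⟩
  rw [himage, Finset.card_image_of_injOn, Finset.card_range]
  intro a ha b hb hab
  exact iterate_injOn_Iio_minimalPeriod (by simpa using ha) (by simpa using hb)
    (by simpa only [iterate_rotate_one] using hab)

theorem sum_range_getD {M : Type*} [AddCommMonoid M] (L : List α) (a : α) (f : α → M) :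
    ∑ i ∈ Finset.range L.length, f (L.getD i a) = (L.map f).sum := by
  rw [← Fin.sum_univ_eq_sum_range, ← Fin.sum_univ_fun_getElem]
  simp

end List

namespace Nat

variable {n : ℕ}

theorem count_modEq_add_of_le (hn : 0 < n) (r F : ℕ) {d : ℕ} (hd : d ≤ n) :
    count (· ≡ r [MOD n]) (F + d) =
      count (· ≡ r [MOD n]) F + if ((r : ℤ) - F) % n < d then 1 else 0 := by
  rw [count_add]
  congr 1
  set e := ((r : ℤ) - F) % n
  have he : 0 ≤ e := Int.emod_nonneg _ (by omega)
  have hwindow : ∀ k ∈ range d, F + k ≡ r [MOD n] ↔ k = e.toNat := by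
    intro k hk
    have hkn : (k : ℤ) < n := by simp at hk; omega
    rw [← Int.natCast_modEq_iff, Int.modEq_iff_dvd,
      show (r : ℤ) - ((F + k : ℕ) : ℤ) = ((r : ℤ) - F) - k by push_cast; ring,
      ← Int.modEq_iff_dvd, Int.ModEq, Int.emod_eq_of_lt (by omega) hkn]
    omega
  rw [count_eq_card_filter_range, filter_congr hwindow, filter_eq']
  split_ifs with h₁ h₂ <;> simp only [mem_range] at h₁ <;> simp <;> omega

/-- With `F j = ∑ i < j, d i`, the windows `[F j, F j + d j)` tile `[0, F K)`; as `d j ≤ n`,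
window `j` contains a number `≡ r [MOD n]` iff `(r - F j) % n < d j`, and then exactly one. -/
theorem card_filter_emod_lt_eq_count (hn : 0 < n) (r : ℕ) (d : ℕ → ℕ) (K : ℕ)
    (hd : ∀ j < K, d j ≤ n) :
    #{j ∈ range K | ((r : ℤ) - (∑ i ∈ range j, d i : ℕ)) % n < d j} =
      count (· ≡ r [MOD n]) (∑ i ∈ range K, d i) := by
  induction K with
  | zero => simp
  | succ K ih =>
    rw [card_filter, sum_range_succ, ← card_filter, ih fun j hj => hd j (by omega),
      sum_range_succ, count_modEq_add_of_le hn r _ (hd K (by omega))]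

theorem div_le_count_modEq (hn : 0 < n) (H r : ℕ) : H / n ≤ count (· ≡ r [MOD n]) H := by
  rw [count_modEq_card H hn]
  exact le_add_right _ _

theorem count_modEq_le_ceil_div (hn : 0 < n) (H r : ℕ) :
    count (· ≡ r [MOD n]) H ≤ (H + n - 1) / n := by
  rw [count_modEq_card H hn]
  split_ifs with h
  · rw [le_div_iff_mul_le hn, add_mul, one_mul]
    have := div_add_mod' H n
    omega
  · exact Nat.div_le_div_right (by omega)

theorem count_modEq_le_count_modEq_add_one (hn : 0 < n) (H r r' : ℕ) :
    count (· ≡ r [MOD n]) H ≤ count (· ≡ r' [MOD n]) H + 1 := by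
  rw [count_modEq_card H hn, count_modEq_card H hn]
  split_ifs <;> omega

end Nat

namespace NDCA

theorem isPeriodOf_iff {t : List ℕ} {p : ℕ} :
    IsPeriodOf t p ↔ 1 ≤ p ∧ p ∣ t.length ∧ t.rotate p = t :=
  and_congr_right fun _ => and_congr_right fun hp =>
    (List.rotate_eq_self_iff_eq_flatten_replicate (Nat.div_mul_cancel hp).symm).symm

theorem isPeriodOf_length {t : List ℕ} (ht : t ≠ []) : IsPeriodOf t t.length :=
  isPeriodOf_iff.2 ⟨List.length_pos_iff.2 ht, dvd_rfl, t.rotate_length⟩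

theorem isPeriodOf_period {t : List ℕ} (ht : t ≠ []) : IsPeriodOf t (period t) :=
  Nat.sInf_mem (s := {p | IsPeriodOf t p}) ⟨_, isPeriodOf_length ht⟩

theorem period_eq_minimalPeriod {t : List ℕ} (ht : t ≠ []) :
    period t = minimalPeriod (fun l : List ℕ => l.rotate 1) t := by
  have hlen := List.isPeriodicPt_rotate_one_iff.2 t.rotate_length
  have hmin : IsPeriodOf t (minimalPeriod (fun l : List ℕ => l.rotate 1) t) :=
    isPeriodOf_iff.2 ⟨hlen.minimalPeriod_pos (List.length_pos_iff.2 ht), hlen.minimalPeriod_dvd,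
      List.isPeriodicPt_rotate_one_iff.1 (isPeriodicPt_minimalPeriod _ _)⟩
  refine le_antisymm (Nat.sInf_le hmin) (le_csInf ⟨_, hmin⟩ fun p hp => ?_)
  obtain ⟨hp, -, hrot⟩ := isPeriodOf_iff.1 hp
  exact (List.isPeriodicPt_rotate_one_iff.2 hrot).minimalPeriod_le hp

theorem shiftEquiv_iff_isRotated {t u : List ℕ} (ht : t ≠ []) : ShiftEquiv t u ↔ t ~r u := by
  constructor
  · rintro ⟨k, -, rfl⟩
    exact ⟨k, rfl⟩
  · rintro ⟨k, rfl⟩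
    exact ⟨k % t.length, Nat.mod_lt _ (List.length_pos_iff.2 ht), (t.rotate_mod k).symm⟩

theorem shiftEquiv_iff_mem_image_rotate {t u : List ℕ} :
    ShiftEquiv t u ↔ u ∈ (range t.length).image t.rotate := by
  simp [ShiftEquiv, eq_comm]

section IncrementArray

variable {n s : ℕ} {t : List ℕ}

theorem IsIA.ne_nil (h : IsIA n s t) (hs : 1 ≤ s) : t ≠ [] := by
  rintro rfl
  simp [IsIA] at h
  omega

theorem IsIA.rotate (h : IsIA n s t) (k : ℕ) : IsIA n s (t.rotate k) :=
  ⟨(t.length_rotate k).trans h.1, (t.rotate_perm k).sum_eq.trans h.2⟩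

theorem IsIA.period_le (h : IsIA n s t) (hs : 1 ≤ s) : period t ≤ s :=
  Nat.le_of_dvd hs (h.1 ▸ (isPeriodOf_period (h.ne_nil hs)).2.1)

theorem IsIA.mul_stride (h : IsIA n s t) (hs : 1 ≤ s) (hsn : s ≤ n) :
    s * stride n s t = n * period t := by
  obtain ⟨hp, ⟨k, hk⟩, hflat⟩ := isPeriodOf_period (h.ne_nil hs)
  set p := period t
  set b := t.take p
  have hk' : t.length / p = k := by rw [hk, Nat.mul_div_cancel_left _ hp]
  have hsum : t.sum = k * b.sum := by
    conv_lhs => rw [hflat, hk']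
    simp
  have hn : n = p * k + k * b.sum := by have := h.2; have := h.1; omega
  have hkey : n * p = s * (p + b.sum) := by rw [← h.1, hk, hn]; ring
  rw [stride, hkey, Nat.mul_div_cancel_left _ hs]

theorem IsIA.stride_le (h : IsIA n s t) (hs : 1 ≤ s) (hsn : s ≤ n) : stride n s t ≤ n := by
  refine Nat.le_of_mul_le_mul_left ?_ hs
  rw [h.mul_stride hs hsn, mul_comm s]
  exact Nat.mul_le_mul_left n (h.period_le hs)

theorem IsIA.stride_eq_of_period_eq (h : IsIA n s t) (hs : 1 ≤ s) (hsn : s ≤ n)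
    (hp : period t = s) : stride n s t = n :=
  Nat.eq_of_mul_eq_mul_left hs (by rw [h.mul_stride hs hsn, hp, mul_comm])

end IncrementArray

def iaFinset (n s : ℕ) : Finset (List ℕ) :=
  (piAntidiag (univ : Finset (Fin s)) (n - s)).map ⟨List.ofFn, List.ofFn_injective⟩

theorem mem_iaFinset {n s : ℕ} {u : List ℕ} : u ∈ iaFinset n s ↔ IsIA n s u := by
  simp only [iaFinset, mem_map, mem_piAntidiag, mem_univ, implies_true, and_true,
    Embedding.coeFn_mk, IsIA]
  constructor
  · rintro ⟨f, hf, rfl⟩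
    simpa [List.sum_ofFn] using hf
  · rintro ⟨rfl, hsum⟩
    exact ⟨u.get, by simpa using hsum, List.ofFn_get u⟩

theorem card_iaFinset {n s : ℕ} (hs : 1 ≤ s) (hsn : s ≤ n) :
    #(iaFinset n s) = (n - 1).choose (s - 1) := by
  have hcard : #(finsuppAntidiag (univ : Finset (Fin s)) (n - s))
      = #(piAntidiag (univ : Finset (Fin s)) (n - s)) := by
    simp [finsuppAntidiag]
  rw [iaFinset, card_map, ← hcard, card_finsuppAntidiag_nat_eq_choose, card_univ,
    Fintype.card_fin, show s + (n - s) - 1 = n - 1 by omega]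
  exact Nat.choose_symm_of_eq_add (by omega)

section Representatives

variable {n s : ℕ} {R : Finset (List ℕ)}

theorem sum_period_eq_choose (hs : 1 ≤ s) (hsn : s ≤ n) (hIA : ∀ t ∈ R, IsIA n s t)
    (hdistinct : ∀ t ∈ R, ∀ u ∈ R, ShiftEquiv t u → t = u)
    (hcomplete : ∀ u, IsIA n s u → ∃ t ∈ R, ShiftEquiv t u) :
    ∑ t ∈ R, period t = (n - 1).choose (s - 1) := by
  have hunion : R.biUnion (fun t => (range t.length).image t.rotate) = iaFinset n s := by
    ext u
    simp only [mem_biUnion, ← shiftEquiv_iff_mem_image_rotate, mem_iaFinset]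
    constructor
    · rintro ⟨t, ht, k, -, rfl⟩
      exact (hIA t ht).rotate k
    · exact hcomplete u
  have hdisj : (R : Set (List ℕ)).PairwiseDisjoint (fun t => (range t.length).image t.rotate) := by
    intro t ht t' ht' hne
    refine disjoint_left.2 fun u hu hu' => hne (hdistinct t ht t' ht' ?_)
    rw [← shiftEquiv_iff_mem_image_rotate, shiftEquiv_iff_isRotated ((hIA t ht).ne_nil hs)] at hu
    rw [← shiftEquiv_iff_mem_image_rotate, shiftEquiv_iff_isRotated ((hIA t' ht').ne_nil hs)] at hu'
    rw [shiftEquiv_iff_isRotated ((hIA t ht).ne_nil hs)]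
    exact hu.trans hu'.symm
  rw [← card_iaFinset hs hsn, ← hunion, card_biUnion hdisj]
  refine sum_congr rfl fun t ht => ?_
  rw [List.card_image_rotate_range ((hIA t ht).ne_nil hs),
    period_eq_minimalPeriod ((hIA t ht).ne_nil hs)]

theorem choose_eq_sum_stride (hs : 1 ≤ s) (hsn : s ≤ n) (hIA : ∀ t ∈ R, IsIA n s t)
    (hdistinct : ∀ t ∈ R, ∀ u ∈ R, ShiftEquiv t u → t = u)
    (hcomplete : ∀ u, IsIA n s u → ∃ t ∈ R, ShiftEquiv t u) :
    n.choose s = ∑ t ∈ R, stride n s t := by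
  refine Nat.eq_of_mul_eq_mul_left hs ?_
  rw [mul_sum, sum_congr rfl fun t ht => (hIA t ht).mul_stride hs hsn, ← mul_sum,
    sum_period_eq_choose hs hsn hIA hdistinct hcomplete]
  obtain ⟨n, rfl⟩ : ∃ m, n = m + 1 := ⟨n - 1, by omega⟩
  obtain ⟨s, rfl⟩ : ∃ m, s = m + 1 := ⟨s - 1, by omega⟩
  rw [Nat.add_one_sub_one, Nat.add_one_sub_one, Nat.add_one_mul_choose_eq, mul_comm]

end Representatives

theorem desigCount_eq_count {n s x : ℕ} {L : List (List ℕ)} (hn : 0 < n) (hx : 1 ≤ x)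
    (hL : ∀ t ∈ L, stride n s t ≤ n) :
    desigCount n s L x = Nat.count (· ≡ x - 1 [MOD n]) (L.map (stride n s)).sum := by
  rw [desigCount, show (x : ℤ) - 1 = ((x - 1 : ℕ) : ℤ) by omega, ← List.sum_range_getD L []]
  refine Nat.card_filter_emod_lt_eq_count hn (x - 1) _ _ fun j hj => ?_
  rw [List.getD_eq_getElem _ _ hj]
  exact hL _ (L.getElem_mem hj)

theorem stmt15_general (n s : ℕ) (hs1 : 1 ≤ s) (hsn : s ≤ n)
    (R : Finset (List ℕ))
    (hIA : ∀ t ∈ R, IsIA n s t)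
    (hdistinct : ∀ t ∈ R, ∀ u ∈ R, ShiftEquiv t u → t = u)
    (hcomplete : ∀ u, IsIA n s u → ∃ t ∈ R, ShiftEquiv t u)
    (L : List (List ℕ)) (hnd : L.Nodup)
    (hLmem : L.toFinset = R.filter (fun t => period t < s)) :
    ∀ x ∈ Finset.Icc 1 n,
      Nat.choose n s / n
          ≤ (R.filter (fun t => period t = s)).card + desigCount n s L x ∧
      (R.filter (fun t => period t = s)).card + desigCount n s L x
          ≤ (Nat.choose n s + n - 1) / n ∧
      ∀ y ∈ Finset.Icc 1 n,
        (R.filter (fun t => period t = s)).card + desigCount n s L x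
          ≤ ((R.filter (fun t => period t = s)).card + desigCount n s L y)
              + 1 := by
  have hn : 0 < n := by omega
  set A := #(R.filter (fun t => period t = s))
  set H := (L.map (stride n s)).sum with hH
  have hchoose : n.choose s = n * A + H := by
    rw [choose_eq_sum_stride hs1 hsn hIA hdistinct hcomplete,
      ← sum_filter_add_sum_filter_not R (fun t => period t = s),
      sum_congr rfl fun t ht => (hIA t (mem_filter.1 ht).1).stride_eq_of_period_eq hs1 hsn
        (mem_filter.1 ht).2, sum_const, smul_eq_mul, mul_comm, hH, ← List.sum_toFinset _ hnd, hLmem]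
    congr 1
    exact sum_congr (filter_congr fun t ht => by have := (hIA t ht).period_le hs1; omega)
      fun _ _ => rfl
  have hcount : ∀ x ∈ Icc 1 n, desigCount n s L x = Nat.count (· ≡ x - 1 [MOD n]) H :=
    fun x hx => desigCount_eq_count hn (mem_Icc.1 hx).1 fun t ht =>
      (hIA t (mem_filter.1 (hLmem ▸ List.mem_toFinset.2 ht)).1).stride_le hs1 hsn
  intro x hx
  rw [hchoose, hcount x hx, Nat.mul_add_div hn,
    show n * A + H + n - 1 = n * A + (H + n - 1) by omega, Nat.mul_add_div hn]
  refine ⟨?_, ?_, fun y hy => ?_⟩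
  · exact Nat.add_le_add_left (Nat.div_le_count_modEq hn H _) A
  · exact Nat.add_le_add_left (Nat.count_modEq_le_ceil_div hn H _) A
  · rw [hcount y hy, add_assoc]
    exact Nat.add_le_add_left (Nat.count_modEq_le_count_modEq_add_one hn H _ _) A

/-- **per-size load balance.**  Let `R` contain one
representative of each `≈`-class of size-`s` increment arrays, and let `L`
enumerate (in a fixed order, without repetition) the periodic ones.  Under
the rotated designation scheme, each agent `x ∈ {1,…,n}` receives
`|CV_x^s| = |A(n,s)| + #{j : (x-1-h_j) mod n < d_j}` coalitions of size `s`,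
and `⌊C(n,s)/n⌋ ≤ |CV_x^s| ≤ ⌈C(n,s)/n⌉`; in particular the per-size
allocations of any two agents differ by at most 1. -/
theorem stmt15 (n s : ℕ) (hn : 1 ≤ n) (hs1 : 1 ≤ s) (hsn : s ≤ n)
    (R : Finset (List ℕ))
    (hIA : ∀ t ∈ R, IsIA n s t)
    (hdistinct : ∀ t ∈ R, ∀ u ∈ R, ShiftEquiv t u → t = u)
    (hcomplete : ∀ u, IsIA n s u → ∃ t ∈ R, ShiftEquiv t u)
    (L : List (List ℕ)) (hnd : L.Nodup)
    (hLmem : L.toFinset = R.filter (fun t => period t < s)) :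
    ∀ x ∈ Finset.Icc 1 n,
      Nat.choose n s / n
          ≤ (R.filter (fun t => period t = s)).card + desigCount n s L x ∧
      (R.filter (fun t => period t = s)).card + desigCount n s L x
          ≤ (Nat.choose n s + n - 1) / n ∧
      ∀ y ∈ Finset.Icc 1 n,
        (R.filter (fun t => period t = s)).card + desigCount n s L x
          ≤ ((R.filter (fun t => period t = s)).card + desigCount n s L y)
              + 1 :=
  stmt15_general n s hs1 hsn R hIA hdistinct hcomplete L hnd hLmem

end NDCA
end
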